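/- arXiv:0806.3560 — 3 statements merged into one kernel-verified Lean document; each statement's English description precedes it below -/
import Mathlib

section
/- Let C_{m,n} = (1/2)·((m−n)/(m+n+1))·binom(−1/2, m)·binom(−1/2, n) for nonnegative integers m, n, and let G(x₁,x₂) = Σ_{m≥0} Σ_{n≥0} C_{m,n} x₁^m x₂^n as a formal power series. Then (x₂−x₁)·G(x₁,x₂) = (1/2)(1+x₁)^{1/2}(1+x₂)^{−1/2} + (1/2)(1+x₁)^{−1/2}(1+x₂)^{1/2} − 1 in ℚ[[x₁,x₂]]. -/
open MvPowerSeries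

/-- Generalized binomial coefficient `(x choose k)` over `ℚ`. -/
noncomputable def gbinom (x : ℚ) (k : ℕ) : ℚ :=
  (descPochhammer ℚ k).eval x / k.factorial

/-- The coefficients `C_{m,n}`. -/
noncomputable def Cmn (m n : ℕ) : ℚ :=
  (1/2) * (((m : ℚ) - n) / ((m : ℚ) + n + 1)) * gbinom (-1/2) m * gbinom (-1/2) n

/-- `G(x₁,x₂) = Σ C_{m,n} x₁^m x₂^n`. -/
noncomputable def Gser : MvPowerSeries (Fin 2) ℚ :=
  fun d => Cmn (d 0) (d 1)

/-- `(1+x₁)^a (1+x₂)^b` as a formal power series in two variables. -/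
noncomputable def binPow (a b : ℚ) : MvPowerSeries (Fin 2) ℚ :=
  fun d => gbinom a (d 0) * gbinom b (d 1)

lemma gbinom_zero (x : ℚ) : gbinom x 0 = 1 := by
  simp [gbinom, descPochhammer_zero]

lemma gbinom_succ (x : ℚ) (k : ℕ) :
    gbinom x (k+1) = gbinom x k * (x - k) / (k+1) := by
  rw [gbinom, gbinom, descPochhammer_succ_right, Polynomial.eval_mul, Nat.factorial_succ]
  simp only [Polynomial.eval_sub, Polynomial.eval_X, Polynomial.eval_natCast]
  have hk : ((k).factorial : ℚ) ≠ 0 := by exact_mod_cast (Nat.factorial_pos k).ne'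
  have hk1 : ((k:ℚ)+1) ≠ 0 := by positivity
  push_cast
  rw [div_eq_div_iff (by positivity) (by positivity)]
  field_simp

lemma gbinom_pascal (x : ℚ) (k : ℕ) :
    gbinom x (k+1) = gbinom (x-1) (k+1) + gbinom (x-1) k := by
  have h1 : (descPochhammer ℚ (k+1)).eval x = x * (descPochhammer ℚ k).eval (x-1) := by
    rw [descPochhammer_succ_left]
    simp [Polynomial.eval_comp]
  have h2 : (descPochhammer ℚ (k+1)).eval (x-1)
      = (descPochhammer ℚ k).eval (x-1) * (x - 1 - k) := by
    rw [descPochhammer_succ_right]; simp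
  rw [gbinom, gbinom, gbinom, h1, h2, Nat.factorial_succ]
  have hk : ((k).factorial : ℚ) ≠ 0 := by exact_mod_cast (Nat.factorial_pos k).ne'
  have hk1 : ((k:ℚ)+1) ≠ 0 := by positivity
  field_simp
  push_cast
  ring

lemma pascal_half (k : ℕ) :
    gbinom (1/2) (k+1) = gbinom (-1/2) (k+1) + gbinom (-1/2) k := by
  have := gbinom_pascal (1/2) k
  norm_num at this
  convert this using 3 <;> norm_num

lemma key (m n : ℕ) :
    (if 1 ≤ n then Cmn m (n-1) else 0) - (if 1 ≤ m then Cmn (m-1) n else 0)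
      = 1/2 * (gbinom (1/2) m * gbinom (-1/2) n)
        + 1/2 * (gbinom (-1/2) m * gbinom (1/2) n)
        - (if m = 0 ∧ n = 0 then 1 else 0) := by
  rcases m with _ | M <;> rcases n with _ | N
  · simp only [Nat.lt_irrefl, not_le, if_neg, Nat.le_zero, and_self, if_pos, gbinom_zero]
    norm_num [gbinom_zero]
  · -- m = 0, n = N+1
    simp only [Nat.le_refl, le_add_iff_nonneg_left, zero_le, if_true, if_pos,
      Nat.add_sub_cancel, not_lt, if_neg, Nat.succ_ne_zero, and_false, false_and]
    rw [pascal_half N, gbinom_succ (-1/2) N]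
    simp only [Cmn, gbinom_zero]
    have h1 : ((N:ℚ)+1) ≠ 0 := by positivity
    push_cast
    field_simp
    ring
  · simp only [Nat.le_refl, le_add_iff_nonneg_left, zero_le, if_true, if_pos,
      Nat.add_sub_cancel, Nat.succ_ne_zero, and_false, false_and, if_neg, not_lt]
    rw [pascal_half M, gbinom_succ (-1/2) M]
    simp only [Cmn, gbinom_zero]
    have h1 : ((M:ℚ)+1) ≠ 0 := by positivity
    push_cast
    norm_num
    field_simp
    ring
  · simp only [le_add_iff_nonneg_left, zero_le, if_pos, Nat.add_sub_cancel,
      Nat.succ_ne_zero, and_false, false_and, if_neg]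
    simp only [Cmn]
    rw [pascal_half M, pascal_half N, gbinom_succ (-1/2) M, gbinom_succ (-1/2) N]
    have h1 : ((M:ℚ)+1) ≠ 0 := by positivity
    have h2 : ((N:ℚ)+1) ≠ 0 := by positivity
    have h3 : ((M:ℚ)+N+2) ≠ 0 := by positivity
    push_cast
    have e1 : (M:ℚ)+1+N+1 = (M:ℚ)+N+2 := by ring
    have e2 : (M:ℚ)+(N+1)+1 = (M:ℚ)+N+2 := by ring
    rw [e1, e2]
    field_simp
    ring

theorem stmt0 :
    (MvPowerSeries.X 1 - MvPowerSeries.X 0) * Gser =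
      (MvPowerSeries.C (1/2) : MvPowerSeries (Fin 2) ℚ) * binPow (1/2) (-1/2)
        + (MvPowerSeries.C (1/2) : MvPowerSeries (Fin 2) ℚ) * binPow (-1/2) (1/2) - 1 := by
  ext d
  have hX : ∀ (i : Fin 2) (f : MvPowerSeries (Fin 2) ℚ),
      (coeff d) (MvPowerSeries.X i * f)
        = if 1 ≤ d i then (coeff (d - Finsupp.single i 1)) f else 0 := by
    intro i f
    rw [MvPowerSeries.X, coeff_monomial_mul]
    simp [Finsupp.single_le_iff]
  have hGser : ∀ e : Fin 2 →₀ ℕ, (coeff e) Gser = Cmn (e 0) (e 1) := fun _ => rfl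
  have hbin : ∀ (a b : ℚ), (coeff d) (binPow a b) = gbinom a (d 0) * gbinom b (d 1) :=
    fun _ _ => rfl
  have hsub : ∀ (i j : Fin 2), ((d - Finsupp.single i 1 : Fin 2 →₀ ℕ)) j = d j - (if i = j then 1 else 0) := by
    intro i j
    rw [Finsupp.tsub_apply, Finsupp.single_apply]
  rw [sub_mul, map_sub, map_sub, map_add, hX, hX, coeff_C_mul, coeff_C_mul, hbin, hbin,
    coeff_one, hGser, hGser, hsub, hsub, hsub, hsub]
  have hd0 : d = 0 ↔ d 0 = 0 ∧ d 1 = 0 := by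
    constructor
    · intro h; simp [h]
    · rintro ⟨h0, h1⟩
      ext j
      fin_cases j <;> simpa
  simp only [hd0]
  norm_num
  have := key (d 0) (d 1)
  norm_num at this
  convert this using 3
end

section
/- Let m be a positive integer, c = 3/2 − 12m²/(2m+1), and h^{2i+2,1} = ((2i+2−(2m+1))² − 4m²)/(8(2m+1)) + 1/16. Then for every i with 0 ≤ i ≤ 3m, h^{2i+2,1} ≠ c/24. In other words, x = c/24 is not a root of f(x) = Π_{i=0}^{3m}(x − h^{2i+2,1}). -/
/-- The lowest conformal weight `h^{2i+2,1}` for the parameter `m`. -/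
noncomputable def hwt (m i : ℕ) : ℚ :=
  (((2 * (i : ℚ) + 2) - (2 * m + 1)) ^ 2 - 4 * (m : ℚ) ^ 2) / (8 * (2 * (m : ℚ) + 1)) + 1/16

/-- The central charge `c_{2m+1,1}`. -/
noncomputable def cc (m : ℕ) : ℚ := 3/2 - 12 * (m : ℚ) ^ 2 / (2 * (m : ℚ) + 1)

theorem stmt5 (m : ℕ) (hm : 0 < m) :
    ∀ i ≤ 3 * m, hwt m i ≠ cc m / 24 := by
  intro i _ h
  have hM : (2 * (m : ℚ) + 1) ≠ 0 := by positivity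
  unfold hwt cc at h
  field_simp at h
  have hsq : ((2 * (i : ℚ) + 1) - 2 * m) ^ 2 = 0 := by nlinarith [h]
  have h2 : (2 * (i : ℚ) + 1) = 2 * m := by
    have := pow_eq_zero_iff (n := 2) (by norm_num) |>.mp hsq
    linarith
  have : 2 * i + 1 = 2 * m := by exact_mod_cast h2
  omega
end

section
/- Let q be a complex number with |q| < 1. Then Π_{n≥1}(1−q^{n−1/2})·Π_{n≥1}(1+q^{n−1/2})·Π_{n≥1}(1+q^n) = 1, where q^{1/2} is a fixed square root of q. -/
open Complex

/-- If `a` is summable with all terms of norm `< 1`, then `∏ (1 + a n)` is multipliable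
and nonzero. -/
lemma stmt15_aux (a : ℕ → ℂ) (h : Summable a) (h1 : ∀ n, ‖a n‖ < 1) :
    Multipliable (fun n => 1 + a n) ∧ (∏' n, (1 + a n)) ≠ 0 := by
  have hne : ∀ n, 1 + a n ≠ 0 := by
    intro n hn
    have h2 := h1 n
    have : a n = -1 := by linear_combination hn
    rw [this] at h2
    simp at h2
  have hlog : Summable fun n => Complex.log (1 + a n) := by
    have h0 : Filter.Tendsto a Filter.atTop (nhds 0) := h.tendsto_atTop_zero
    have hev : ∀ᶠ n in Filter.atTop, ‖a n‖ ≤ 1 / 2 := by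
      have := h0.norm
      simp only [norm_zero] at this
      exact this.eventually_le_const (by norm_num)
    refine Summable.of_norm_bounded_eventually (g := fun n => (3 / 2 : ℝ) * ‖a n‖)
      (h.norm.mul_left _) ?_
    rw [Nat.cofinite_eq_atTop]
    filter_upwards [hev] with n hn
    exact Complex.norm_log_one_add_half_le_self hn
  have hmult : Multipliable (fun n => 1 + a n) := by
    have := Complex.multipliable_of_summable_log hlog
    exact this
  refine ⟨hmult, ?_⟩
  have := Complex.cexp_tsum_eq_tprod (f := fun n => 1 + a n) hne hlog
  rw [← this]
  exact Complex.exp_ne_zero _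

theorem stmt15 (q r : ℂ) (hq : ‖q‖ < 1) (hr : r ^ 2 = q) :
    (∏' n : ℕ, (1 - r ^ (2 * n + 1))) * (∏' n : ℕ, (1 + r ^ (2 * n + 1))) *
        (∏' n : ℕ, (1 + q ^ (n + 1))) = 1 := by
  have hrn : ‖r‖ < 1 := by
    have : ‖r‖ ^ 2 < 1 := by rw [← norm_pow, hr]; exact hq
    nlinarith [norm_nonneg r]
  -- summability helpers
  have hsum_r : Summable fun n : ℕ => r ^ (2 * n + 1) := by
    have : Summable fun n : ℕ => ‖r‖ ^ (2 * n + 1) := by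
      apply Summable.of_nonneg_of_le (fun n => by positivity)
        (fun n => pow_le_pow_of_le_one (norm_nonneg r) hrn.le (by omega))
        (summable_geometric_of_lt_one (norm_nonneg r) hrn)
    exact Summable.of_norm (by simpa [norm_pow] using this)
  have hnorm_r : ∀ n : ℕ, ‖r ^ (2 * n + 1)‖ < 1 := fun n => by
    rw [norm_pow]
    exact pow_lt_one₀ (norm_nonneg r) hrn (by omega)
  have hsum_q : Summable fun n : ℕ => q ^ (n + 1) := by
    have : Summable fun n : ℕ => ‖q‖ ^ (n + 1) := by
      apply Summable.of_nonneg_of_le (fun n => by positivity)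
        (fun n => pow_le_pow_of_le_one (norm_nonneg q) hq.le (by omega))
        (summable_geometric_of_lt_one (norm_nonneg q) hq)
    exact Summable.of_norm (by simpa [norm_pow] using this)
  have hnorm_q : ∀ n : ℕ, ‖q ^ (n + 1)‖ < 1 := fun n => by
    rw [norm_pow]; exact pow_lt_one₀ (norm_nonneg q) hq (by omega)
  have hsum_q2 : Summable fun n : ℕ => q ^ (2 * n + 1) := by
    have : Summable fun n : ℕ => ‖q‖ ^ (2 * n + 1) := by
      apply Summable.of_nonneg_of_le (fun n => by positivity)
        (fun n => pow_le_pow_of_le_one (norm_nonneg q) hq.le (by omega))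
        (summable_geometric_of_lt_one (norm_nonneg q) hq)
    exact Summable.of_norm (by simpa [norm_pow] using this)
  -- multipliability facts
  obtain ⟨m1, _⟩ := stmt15_aux (fun n => -(r ^ (2 * n + 1))) hsum_r.neg
    (fun n => by simpa using hnorm_r n)
  obtain ⟨m2, _⟩ := stmt15_aux (fun n => r ^ (2 * n + 1)) hsum_r hnorm_r
  obtain ⟨m3, _⟩ := stmt15_aux (fun n => q ^ (n + 1)) hsum_q hnorm_q
  obtain ⟨m4, hA⟩ := stmt15_aux (fun n => -(q ^ (n + 1))) hsum_q.neg
    (fun n => by simpa using hnorm_q n)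
  have hnorm_q2 : ∀ n : ℕ, ‖q ^ (2 * n + 1)‖ < 1 := fun n => by
    rw [norm_pow]; exact pow_lt_one₀ (norm_nonneg q) hq (by omega)
  obtain ⟨m5, _⟩ := stmt15_aux (fun n => -(q ^ (2 * n + 1))) hsum_q2.neg
    (fun n => by simpa using hnorm_q2 n)
  have m1' : Multipliable fun n : ℕ => 1 - r ^ (2 * n + 1) := by
    refine m1.congr fun n => by ring
  have m4' : Multipliable fun n : ℕ => 1 - q ^ (n + 1) := by
    refine m4.congr fun n => by ring
  have m5' : Multipliable fun n : ℕ => 1 - q ^ (2 * n + 1) := by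
    refine m5.congr fun n => by ring
  -- Step A: combine first two products
  have stepA : (∏' n : ℕ, (1 - r ^ (2 * n + 1))) * (∏' n : ℕ, (1 + r ^ (2 * n + 1)))
      = ∏' n : ℕ, (1 - q ^ (2 * n + 1)) := by
    rw [← Multipliable.tprod_mul m1' m2]
    apply tprod_congr
    intro n
    have : q ^ (2 * n + 1) = (r ^ (2 * n + 1)) ^ 2 := by
      rw [← hr]; ring
    rw [this]; ring
  rw [stepA]
  -- Step B: Euler's identity
  -- A = ∏ (1 - q^(n+1)), with even/odd split: A = C * B where
  -- C = ∏ (1 - q^(2n+1)), B = ∏ (1 - q^(2n+2)); and B = A * D with D = ∏ (1 + q^(n+1)).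
  have meven : Multipliable fun k : ℕ => 1 - q ^ (2 * k + 1) := m5'
  have modd : Multipliable fun k : ℕ => 1 - q ^ (2 * k + 1 + 1) := by
    refine Multipliable.congr (f := fun k : ℕ => (1 - q ^ (k+1)) * (1 + q ^ (k+1)))
      ?_ fun k => ?_
    · exact m4'.mul m3
    · have : q ^ (2 * k + 1 + 1) = q ^ (k + 1) * q ^ (k + 1) := by ring
      rw [this]; ring
  have hsplit : (∏' k : ℕ, (1 - q ^ (2 * k + 1))) * (∏' k : ℕ, (1 - q ^ (2 * k + 1 + 1)))
      = ∏' k : ℕ, (1 - q ^ (k + 1)) := by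
    have := tprod_even_mul_odd (f := fun k : ℕ => 1 - q ^ (k + 1)) meven modd
    exact this
  have hB : (∏' k : ℕ, (1 - q ^ (2 * k + 1 + 1)))
      = (∏' k : ℕ, (1 - q ^ (k + 1))) * (∏' k : ℕ, (1 + q ^ (k + 1))) := by
    rw [← Multipliable.tprod_mul m4' m3]
    apply tprod_congr
    intro k
    have : q ^ (2 * k + 1 + 1) = q ^ (k + 1) * q ^ (k + 1) := by ring
    rw [this]; ring
  rw [hB] at hsplit
  have hA' : (∏' k : ℕ, (1 - q ^ (k + 1))) ≠ 0 := by
    have : (fun n : ℕ => 1 + -(q ^ (n + 1))) = fun n : ℕ => 1 - q ^ (n + 1) := by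
      funext n; ring
    rwa [this] at hA
  have key : (∏' k : ℕ, (1 - q ^ (k + 1))) *
      ((∏' k : ℕ, (1 - q ^ (2 * k + 1))) * ∏' k : ℕ, (1 + q ^ (k + 1))) =
      (∏' k : ℕ, (1 - q ^ (k + 1))) * 1 := by
    rw [mul_one]; linear_combination hsplit
  exact mul_left_cancel₀ hA' key
end
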